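/- arXiv:1912.07866 — 2 statements merged into one kernel-verified Lean document; each statement's English description precedes it below -/
import Mathlib

section
/- Let Ω ⊂ ℝ² be a bounded domain and H ≠ 0. If u ∈ C²(Ω) satisfies the Euclidean constant mean curvature equation div(Du/√(1+|Du|²)) = 2H in Ω, then Ω does not contain the closure of any open disk of radius 1/|H|. -/
set_option autoImplicit false

noncomputable section
open Real Set

abbrev E2 := EuclideanSpace ℝ (Fin 2)

/-- Partial derivative of `u` in the `i`-th coordinate direction. -/
def pd (i : Fin 2) (u : E2 → ℝ) (x : E2) : ℝ :=
  fderiv ℝ u x (EuclideanSpace.single i 1)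

/-- `|Du|²`. -/
def gradSq (u : E2 → ℝ) (x : E2) : ℝ := ∑ i, (pd i u x) ^ 2

/-- Laplacian `Δu`. -/
def lap (u : E2 → ℝ) (x : E2) : ℝ := ∑ i, pd i (pd i u) x

/-- `∑ᵢⱼ Dᵢu Dⱼu Dᵢⱼu`. -/
def crossTerm (u : E2 → ℝ) (x : E2) : ℝ :=
  ∑ i, ∑ j, pd i u x * pd j u x * pd i (pd j u) x

/-- Divergence-form mean curvature operator `div (Du/√(1+ε|Du|²))`. -/
def divMC (ε : ℝ) (u : E2 → ℝ) (x : E2) : ℝ :=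
  ∑ i, pd i (fun y => pd i u y / Real.sqrt (1 + ε * gradSq u y)) x

/-!
The field `V = Du/√(1+|Du|²)` satisfies `|V| ≤ 1` and `div V = 2H`. Testing `div V = h` against
a radial bump `φ` with support in a ball `B(c, b) ⊆ Ω` and integrating by parts gives
`|h| ∫ φ ≤ ∫ |Dφ|`. If `φ = 1` on `B(c, a)` and `φ` decreases radially, the left side is at least
`|h| |B₁| aⁿ`, while in polar coordinates the right side is at most `n |B₁| bⁿ⁻¹`. Letting
`a, b → r` gives Heinz's bound `|h| r ≤ n` for every ball `B(c, r) ⊆ Ω`. In the plane, with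
`h = 2H`, a closed disk of radius `1/|H|` in the open set `Ω` would leave room for a slightly larger
open disk, contradicting `r ≤ 1/|H|`.
-/

open MeasureTheory Metric Module

def stepDown (A B s : ℝ) : ℝ := 1 - smoothTransition ((s - A) / (B - A))

namespace stepDown

variable {A B : ℝ}

theorem contDiff {n : ℕ∞} : ContDiff ℝ n (stepDown A B) :=
  contDiff_const.sub <| smoothTransition.contDiff.comp <|
    (contDiff_id.sub contDiff_const).div_const _

theorem eq_one (h : A ≤ B) {s : ℝ} (hs : s ≤ A) : stepDown A B s = 1 := by
  rw [stepDown, smoothTransition.zero_of_nonpos (div_nonpos_of_nonpos_of_nonneg (by linarith)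
    (by linarith)), sub_zero]

theorem eq_zero (h : A < B) {s : ℝ} (hs : B ≤ s) : stepDown A B s = 0 := by
  rw [stepDown, smoothTransition.one_of_one_le ((le_div_iff₀ (by linarith)).2 (by linarith)),
    sub_self]

theorem nonneg (s : ℝ) : 0 ≤ stepDown A B s :=
  sub_nonneg.2 (smoothTransition.le_one _)

theorem deriv_nonpos (h : A ≤ B) (s : ℝ) : deriv (stepDown A B) s ≤ 0 :=
  Antitone.deriv_nonpos fun _ _ hst => sub_le_sub_left (smoothTransition.monotone (by gcongr)) 1

theorem hasDerivAt_comp_sq (r : ℝ) :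
    HasDerivAt (fun r => stepDown A B (r ^ 2)) (deriv (stepDown A B) (r ^ 2) * (2 * r)) r := by
  show HasDerivAt (stepDown A B ∘ fun r => r ^ 2) _ r
  simpa using ((contDiff (n := 1)).differentiable one_ne_zero _).hasDerivAt.comp r
    (hasDerivAt_pow 2 r)

end stepDown

theorem setIntegral_Ioi_pow_mul_neg_deriv_le {k : ℝ → ℝ} (hk : ContDiff ℝ 1 k)
    (hks : HasCompactSupport k) {b : ℝ} (hk' : ∀ r, 0 < r → deriv k r ≤ 0)
    (hkb : ∀ r, b ≤ r → k r = 0) (n : ℕ) :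
    ∫ r in Ioi 0, r ^ n * -deriv k r ≤ b ^ n * k 0 := by
  have hk'b : ∀ r, b < r → deriv k r = 0 := fun r hr => by
    rw [Filter.EventuallyEq.deriv_eq (f := fun _ => 0), deriv_const]
    filter_upwards [Ioi_mem_nhds hr] with s hs using hkb s (le_of_lt hs)
  have hdk : Continuous (deriv k) := hk.continuous_deriv le_rfl
  have hint : ∀ g : ℝ → ℝ, Continuous g → IntegrableOn (fun r => g r * -deriv k r) (Ioi 0) :=
    fun g hg =>
      ((hg.mul hdk.neg).integrable_of_hasCompactSupport hks.deriv.neg.mul_left).integrableOn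
  calc ∫ r in Ioi 0, r ^ n * -deriv k r
      ≤ ∫ r in Ioi 0, b ^ n * -deriv k r := by
        refine setIntegral_mono_on (hint _ (continuous_pow n)) (hint _ continuous_const)
          measurableSet_Ioi fun r (hr : 0 < r) => ?_
        rcases le_or_gt r b with hrb | hrb
        · exact mul_le_mul_of_nonneg_right (by gcongr) (neg_nonneg.2 (hk' r hr))
        · simp [hk'b r hrb]
    _ = b ^ n * k 0 := by
        rw [integral_const_mul, integral_neg, hks.integral_Ioi_deriv_eq hk, neg_neg]

def radialBump {E : Type*} [NormedAddCommGroup E] (c : E) (a b : ℝ) (x : E) : ℝ :=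
  stepDown (a ^ 2) (b ^ 2) (‖x - c‖ ^ 2)

namespace radialBump

section NormedGroup

variable {E : Type*} [NormedAddCommGroup E] {c : E} {a b : ℝ}

theorem eq_one (ha : 0 ≤ a) (hab : a ≤ b) {x : E} (hx : x ∈ closedBall c a) :
    radialBump c a b x = 1 := by
  rw [mem_closedBall, dist_eq_norm] at hx
  exact stepDown.eq_one (by gcongr) (by gcongr)

theorem tsupport_subset (ha : 0 ≤ a) (hab : a < b) :
    tsupport (radialBump c a b) ⊆ closedBall c b := by
  refine closure_minimal (fun x hx => ?_) isClosed_closedBall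
  by_contra hxb
  rw [mem_closedBall, dist_eq_norm, not_le] at hxb
  exact hx (stepDown.eq_zero (by gcongr) (by gcongr; linarith))

theorem hasCompactSupport [ProperSpace E] (ha : 0 ≤ a) (hab : a < b) :
    HasCompactSupport (radialBump c a b) :=
  (isCompact_closedBall c b).of_isClosed_subset (isClosed_tsupport _) (tsupport_subset ha hab)

end NormedGroup

variable {E : Type*} [NormedAddCommGroup E] [InnerProductSpace ℝ E] {c : E} {a b : ℝ}

theorem contDiff {n : ℕ∞} : ContDiff ℝ n (radialBump c a b) :=
  stepDown.contDiff.comp ((contDiff_norm_sq ℝ).comp (contDiff_id.sub contDiff_const))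

theorem norm_fderiv (hab : a ^ 2 ≤ b ^ 2) (x : E) :
    ‖fderiv ℝ (radialBump c a b) x‖ =
      -deriv (fun r => stepDown (a ^ 2) (b ^ 2) (r ^ 2)) ‖x - c‖ := by
  set g := stepDown (a ^ 2) (b ^ 2)
  have hφ : HasFDerivAt (radialBump c a b) (deriv g (‖x - c‖ ^ 2) • 2 • innerSL ℝ (x - c)) x := by
    show HasFDerivAt (g ∘ fun x => ‖x - c‖ ^ 2) _ x
    simpa using ((stepDown.contDiff (n := 1)).differentiable one_ne_zero _).hasDerivAt
      |>.comp_hasFDerivAt x ((hasFDerivAt_id x).sub_const c).norm_sq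
  rw [hφ.fderiv, (stepDown.hasDerivAt_comp_sq _).deriv, norm_smul, two_smul, ← two_smul ℝ,
    norm_smul, innerSL_apply_norm, Real.norm_of_nonpos (stepDown.deriv_nonpos hab _),
    Real.norm_two]
  ring

variable [FiniteDimensional ℝ E] [MeasurableSpace E] [BorelSpace E] (μ : Measure E)
  [μ.IsAddHaarMeasure]

theorem le_integral (ha : 0 ≤ a) (hab : a < b) :
    μ.real (ball 0 1) * a ^ finrank ℝ E ≤ ∫ x, radialBump c a b x ∂μ := by
  have hint : Integrable (radialBump c a b) μ :=
    (contDiff (n := 0)).continuous.integrable_of_hasCompactSupport (hasCompactSupport ha hab)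
  calc μ.real (ball 0 1) * a ^ finrank ℝ E = ∫ _ in closedBall c a, (1 : ℝ) ∂μ := by
        rw [setIntegral_const, smul_eq_mul, mul_one, measureReal_def, measureReal_def,
          Measure.addHaar_closedBall μ c ha, ENNReal.toReal_mul,
          ENNReal.toReal_ofReal (by positivity), mul_comm]
    _ = ∫ x in closedBall c a, radialBump c a b x ∂μ :=
        setIntegral_congr_fun measurableSet_closedBall fun x hx => (eq_one ha hab.le hx).symm
    _ ≤ ∫ x, radialBump c a b x ∂μ :=
        setIntegral_le_integral hint (.of_forall fun _ => stepDown.nonneg _)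

theorem integral_norm_fderiv_le [Nontrivial E] (ha : 0 ≤ a) (hab : a < b) :
    ∫ x, ‖fderiv ℝ (radialBump c a b) x‖ ∂μ ≤
      finrank ℝ E * μ.real (ball 0 1) * b ^ (finrank ℝ E - 1) := by
  set k : ℝ → ℝ := fun r => stepDown (a ^ 2) (b ^ 2) (r ^ 2)
  have hab2 : a ^ 2 < b ^ 2 := by gcongr
  have hk : ContDiff ℝ 1 k := stepDown.contDiff.comp (contDiff_id.pow 2)
  have hkb : ∀ r, b ≤ r → k r = 0 := fun r hr => stepDown.eq_zero hab2 (by gcongr; linarith)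
  have hks : HasCompactSupport k := by
    refine HasCompactSupport.intro (isCompact_Icc (a := -b) (b := b)) fun r hr => ?_
    refine stepDown.eq_zero hab2 (sq_le_sq.2 ?_)
    rw [mem_Icc, ← abs_le, not_le] at hr
    exact (abs_of_pos (ha.trans_lt hab)).trans_le hr.le
  have hk' : ∀ r, 0 < r → deriv k r ≤ 0 := fun r hr => by
    rw [(stepDown.hasDerivAt_comp_sq r).deriv]
    exact mul_nonpos_of_nonpos_of_nonneg (stepDown.deriv_nonpos hab2.le _) (by positivity)
  have hk0 : k 0 = 1 := stepDown.eq_one hab2.le (by simp; positivity)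
  calc ∫ x, ‖fderiv ℝ (radialBump c a b) x‖ ∂μ = ∫ x, -deriv k ‖x - c‖ ∂μ := by
        simp_rw [norm_fderiv hab2.le]; rfl
    _ = ∫ x, -deriv k ‖x‖ ∂μ := integral_sub_right_eq_self (fun x => -deriv k ‖x‖) c
    _ = finrank ℝ E * μ.real (ball 0 1) * ∫ r in Ioi 0, r ^ (finrank ℝ E - 1) * -deriv k r := by
        rw [integral_fun_norm_addHaar μ (fun r => -deriv k r), nsmul_eq_mul, smul_eq_mul, mul_assoc]
        rfl
    _ ≤ finrank ℝ E * μ.real (ball 0 1) * b ^ (finrank ℝ E - 1) := by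
        grw [setIntegral_Ioi_pow_mul_neg_deriv_le hk hks hk' hkb, hk0, mul_one]

end radialBump

theorem integrable_mul_of_tsupport_subset {X : Type*} [TopologicalSpace X] [MeasurableSpace X]
    [OpensMeasurableSpace X] {μ : Measure X} [IsFiniteMeasureOnCompacts μ] {U : Set X}
    (hU : IsOpen U) {f g : X → ℝ} (hf : Continuous f) (hfc : HasCompactSupport f)
    (hfU : tsupport f ⊆ U) (hg : ContinuousOn g U) : Integrable (fun x => f x * g x) μ :=
  ((hf.continuousOn.mul hg).continuous_of_tsupport_subset hU
    ((tsupport_mul_subset_left).trans hfU)).integrable_of_hasCompactSupport hfc.mul_right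

section Divergence

variable {ι : Type*} [Fintype ι] [DecidableEq ι] {μ : Measure (EuclideanSpace ℝ ι)}
  [μ.IsAddHaarMeasure] {U : Set (EuclideanSpace ℝ ι)} {V : ι → EuclideanSpace ℝ ι → ℝ} {h : ℝ}
  {φ : EuclideanSpace ℝ ι → ℝ}

theorem abs_sum_apply_single_mul_le (L : EuclideanSpace ℝ ι →L[ℝ] ℝ) (w : ι → ℝ) :
    |∑ i, L (EuclideanSpace.single i 1) * w i| ≤ ‖L‖ * √(∑ i, w i ^ 2) := by
  have hw : ∑ i, L (EuclideanSpace.single i 1) * w i = L (WithLp.toLp 2 w) := by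
    conv_rhs => rw [← (EuclideanSpace.basisFun ι ℝ).sum_repr (WithLp.toLp 2 w)]
    simp [map_sum, mul_comm]
  rw [hw, ← Real.norm_eq_abs]
  convert L.le_opNorm _ using 2
  simp [EuclideanSpace.norm_eq]

theorem mul_integral_eq_neg_integral_sum_fderiv_mul (hU : IsOpen U)
    (hV : ∀ i, ContDiffOn ℝ 1 (V i) U)
    (hdiv : ∀ x ∈ U, ∑ i, fderiv ℝ (V i) x (EuclideanSpace.single i 1) = h)
    (hφ : ContDiff ℝ 1 φ) (hφc : HasCompactSupport φ) (hφU : tsupport φ ⊆ U) :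
    h * ∫ x, φ x ∂μ = -∫ x, ∑ i, fderiv ℝ φ x (EuclideanSpace.single i 1) * V i x ∂μ := by
  set e : ι → EuclideanSpace ℝ ι := fun i => EuclideanSpace.single i 1
  have hdφ : ∀ i, Continuous fun x => fderiv ℝ φ x (e i) := fun i =>
    (hφ.continuous_fderiv one_ne_zero).clm_apply continuous_const
  have hdV : ∀ i, ContinuousOn (fun x => fderiv ℝ (V i) x (e i)) U := fun i =>
    ((hV i).continuousOn_fderiv_of_isOpen hU le_rfl).clm_apply continuousOn_const
  have hφV : ∀ i, Integrable (fun x => φ x * V i x) μ := fun i =>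
    integrable_mul_of_tsupport_subset hU hφ.continuous hφc hφU (hV i).continuousOn
  have hφdV : ∀ i, Integrable (fun x => φ x * fderiv ℝ (V i) x (e i)) μ := fun i =>
    integrable_mul_of_tsupport_subset hU hφ.continuous hφc hφU (hdV i)
  have hdφV : ∀ i, Integrable (fun x => fderiv ℝ φ x (e i) * V i x) μ := fun i =>
    integrable_mul_of_tsupport_subset hU (hdφ i) (hφc.fderiv_apply ℝ (e i))
      ((tsupport_fderiv_apply_subset ℝ (e i)).trans hφU) (hV i).continuousOn
  have hparts : ∀ i, ∫ x, φ x * fderiv ℝ (V i) x (e i) ∂μ =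
      -∫ x, fderiv ℝ φ x (e i) * V i x ∂μ := fun i =>
    integral_mul_fderiv_eq_neg_fderiv_mul_of_integrable (hdφV i) (hφdV i) (hφV i)
      (fun x _ => hφ.differentiable one_ne_zero x)
      (fun x hx => ((hV i).differentiableOn one_ne_zero x (hφU hx)).differentiableAt
        (hU.mem_nhds (hφU hx)))
  have hdivφ : ∀ x, φ x * ∑ i, fderiv ℝ (V i) x (e i) = h * φ x := fun x => by
    by_cases hx : x ∈ U
    · rw [hdiv x hx, mul_comm]
    · rw [image_eq_zero_of_notMem_tsupport fun hxφ => hx (hφU hxφ), zero_mul, mul_zero]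
  calc h * ∫ x, φ x ∂μ = ∑ i, ∫ x, φ x * fderiv ℝ (V i) x (e i) ∂μ := by
        simp_rw [← integral_const_mul, ← hdivφ, Finset.mul_sum]
        exact integral_finsetSum _ fun i _ => hφdV i
    _ = -∫ x, ∑ i, fderiv ℝ φ x (e i) * V i x ∂μ := by
        rw [integral_finsetSum _ fun i _ => hdφV i, ← Finset.sum_neg_distrib]
        exact Finset.sum_congr rfl fun i _ => hparts i

theorem abs_mul_integral_le_integral_norm_fderiv (hU : IsOpen U)
    (hV : ∀ i, ContDiffOn ℝ 1 (V i) U) (hV1 : ∀ x ∈ U, ∑ i, V i x ^ 2 ≤ 1)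
    (hdiv : ∀ x ∈ U, ∑ i, fderiv ℝ (V i) x (EuclideanSpace.single i 1) = h)
    (hφ : ContDiff ℝ 1 φ) (hφc : HasCompactSupport φ) (hφU : tsupport φ ⊆ U) :
    |h * ∫ x, φ x ∂μ| ≤ ∫ x, ‖fderiv ℝ φ x‖ ∂μ := by
  rw [mul_integral_eq_neg_integral_sum_fderiv_mul hU hV hdiv hφ hφc hφU, abs_neg]
  refine (abs_integral_le_integral_abs).trans <| integral_mono_of_nonneg
    (.of_forall fun _ => abs_nonneg _)
    ((hφ.continuous_fderiv one_ne_zero).norm.integrable_of_hasCompactSupport (hφc.fderiv ℝ).norm)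
    (.of_forall fun x => ?_)
  by_cases hx : x ∈ U
  · calc _ ≤ ‖fderiv ℝ φ x‖ * √(∑ i, V i x ^ 2) := abs_sum_apply_single_mul_le _ _
      _ ≤ ‖fderiv ℝ φ x‖ := mul_le_of_le_one_right (norm_nonneg _) (sqrt_le_one.2 (hV1 x hx))
  · simp [fderiv_of_notMem_tsupport ℝ fun hxφ => hx (hφU hxφ)]

theorem abs_mul_pow_le_of_closedBall_subset [Nonempty ι] (hU : IsOpen U)
    (hV : ∀ i, ContDiffOn ℝ 1 (V i) U) (hV1 : ∀ x ∈ U, ∑ i, V i x ^ 2 ≤ 1)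
    (hdiv : ∀ x ∈ U, ∑ i, fderiv ℝ (V i) x (EuclideanSpace.single i 1) = h)
    {c : EuclideanSpace ℝ ι} {a b : ℝ} (ha : 0 ≤ a) (hab : a < b) (hb : closedBall c b ⊆ U) :
    |h| * a ^ Fintype.card ι ≤ Fintype.card ι * b ^ (Fintype.card ι - 1) := by
  set n := Fintype.card ι
  set κ := volume.real (ball (0 : EuclideanSpace ℝ ι) 1)
  have hκ : 0 < κ :=
    ENNReal.toReal_pos (measure_ball_pos volume 0 one_pos).ne' measure_ball_lt_top.ne
  have hn : finrank ℝ (EuclideanSpace ℝ ι) = n := finrank_euclideanSpace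
  have hlow := radialBump.le_integral volume (c := c) ha hab
  have hup := radialBump.integral_norm_fderiv_le volume (c := c) ha hab
  have hflux := abs_mul_integral_le_integral_norm_fderiv (μ := volume) hU hV hV1 hdiv
    radialBump.contDiff (radialBump.hasCompactSupport ha hab)
    ((radialBump.tsupport_subset ha hab).trans hb)
  rw [hn] at hlow hup
  rw [abs_mul, abs_of_nonneg ((by positivity : 0 ≤ κ * a ^ n).trans hlow)] at hflux
  refine le_of_mul_le_mul_left ?_ hκ
  calc κ * (|h| * a ^ n) = |h| * (κ * a ^ n) := by ring
    _ ≤ |h| * ∫ x, radialBump c a b x := by gcongr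
    _ ≤ n * κ * b ^ (n - 1) := hflux.trans hup
    _ = κ * (n * b ^ (n - 1)) := by ring

theorem abs_mul_le_card_of_ball_subset [Nonempty ι] (hU : IsOpen U)
    (hV : ∀ i, ContDiffOn ℝ 1 (V i) U) (hV1 : ∀ x ∈ U, ∑ i, V i x ^ 2 ≤ 1)
    (hdiv : ∀ x ∈ U, ∑ i, fderiv ℝ (V i) x (EuclideanSpace.single i 1) = h)
    {c : EuclideanSpace ℝ ι} {r : ℝ} (hr : ball c r ⊆ U) :
    |h| * r ≤ Fintype.card ι := by
  set n := Fintype.card ι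
  rcases le_or_gt r 0 with hr0 | hr0
  · nlinarith [abs_nonneg h]
  -- take `a = t² r < b = t r` and let `t → 1`
  have hlim : |h| * r ^ n ≤ n * r ^ (n - 1) := by
    refine le_of_tendsto_of_tendsto (f := fun t => |h| * (t ^ 2 * r) ^ n)
      (g := fun t => n * (t * r) ^ (n - 1)) (b := nhdsWithin 1 (Iio 1)) ?_ ?_ ?_
    · simpa using ((by fun_prop : Continuous fun t : ℝ => |h| * (t ^ 2 * r) ^ n).tendsto 1)
        |>.mono_left nhdsWithin_le_nhds
    · simpa using ((by fun_prop : Continuous fun t : ℝ => n * (t * r) ^ (n - 1)).tendsto 1)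
        |>.mono_left nhdsWithin_le_nhds
    · filter_upwards [Ioo_mem_nhdsLT one_pos] with t ⟨ht0, ht1⟩
      exact abs_mul_pow_le_of_closedBall_subset hU hV hV1 hdiv (by positivity)
        (by nlinarith [mul_pos ht0 hr0]) ((closedBall_subset_ball (by nlinarith)).trans hr)
  obtain ⟨m, hm⟩ : ∃ m, n = m + 1 := Nat.exists_eq_succ_of_ne_zero Fintype.card_ne_zero
  rw [hm, Nat.add_sub_cancel, pow_succ] at hlim
  rw [hm]
  exact le_of_mul_le_mul_right (by linarith) (pow_pos hr0 m)

end Divergence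

-- `divMC ε u` is by definition the divergence of `mcField ε u`.
def mcField (ε : ℝ) (u : E2 → ℝ) (i : Fin 2) (y : E2) : ℝ :=
  pd i u y / √(1 + ε * gradSq u y)

theorem gradSq_nonneg (u : E2 → ℝ) (y : E2) : 0 ≤ gradSq u y :=
  Finset.sum_nonneg fun _ _ => sq_nonneg _

theorem mcField_sum_sq_le_one {ε : ℝ} (hε : 1 ≤ ε) (u : E2 → ℝ) (y : E2) :
    ∑ i, mcField ε u i y ^ 2 ≤ 1 := by
  have hg := gradSq_nonneg u y
  simp_rw [mcField, div_pow, sq_sqrt (by nlinarith : 0 ≤ 1 + ε * gradSq u y), ← Finset.sum_div]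
  rw [div_le_one (by nlinarith)]
  change gradSq u y ≤ _
  nlinarith

theorem contDiffOn_mcField {ε : ℝ} (hε : 0 ≤ ε) {Ω : Set E2} (hΩ : IsOpen Ω) {u : E2 → ℝ}
    (hu : ContDiffOn ℝ 2 u Ω) (i : Fin 2) : ContDiffOn ℝ 1 (mcField ε u i) Ω := by
  have hpd : ∀ j, ContDiffOn ℝ 1 (pd j u) Ω := fun j =>
    (hu.fderiv_of_isOpen hΩ (by norm_num)).clm_apply contDiffOn_const
  have hW : ContDiffOn ℝ 1 (fun y => 1 + ε * gradSq u y) Ω :=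
    contDiffOn_const.add (contDiffOn_const.mul (ContDiffOn.sum fun j _ => (hpd j).pow 2))
  have hpos : ∀ y, 0 < 1 + ε * gradSq u y := fun y => by
    nlinarith [gradSq_nonneg u y]
  exact (hpd i).div (hW.sqrt fun y _ => (hpos y).ne') fun y _ => (sqrt_pos.2 (hpos y)).ne'

theorem statement_4_general (Ω : Set E2) (hΩ : IsOpen Ω) (H : ℝ) (hH : H ≠ 0)
    (u : E2 → ℝ) (hu : ContDiffOn ℝ 2 u Ω)
    (heq : ∀ x ∈ Ω, divMC 1 u x = 2 * H) :
    ∀ c : E2, ¬ Metric.closedBall c (1 / |H|) ⊆ Ω := by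
  intro c hc
  have hH' : 0 < |H| := abs_pos.2 hH
  obtain ⟨δ, hδ, hδΩ⟩ := (isCompact_closedBall c _).exists_cthickening_subset_open hΩ hc
  rw [cthickening_closedBall hδ.le (by positivity), add_comm] at hδΩ
  have hbound := abs_mul_le_card_of_ball_subset hΩ (contDiffOn_mcField zero_le_one hΩ hu)
    (fun x _ => mcField_sum_sq_le_one le_rfl u x) heq (ball_subset_closedBall.trans hδΩ)
  rw [Fintype.card_fin, abs_mul, abs_two, mul_assoc, mul_add, mul_one_div_cancel hH'.ne'] at hbound
  push_cast at hbound
  nlinarith [mul_pos hH' hδ]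

/-- If `u` solves the Euclidean CMC equation `div(Du/√(1+|Du|²)) = 2H` with `H ≠ 0` on a
bounded domain `Ω ⊂ ℝ²`, then `Ω` contains no closed disk of radius `1/|H|`. -/
theorem statement_4 (Ω : Set E2) (hΩ : IsOpen Ω) (hconn : IsConnected Ω)
    (hb : Bornology.IsBounded Ω) (H : ℝ) (hH : H ≠ 0)
    (u : E2 → ℝ) (hu : ContDiffOn ℝ 2 u Ω)
    (heq : ∀ x ∈ Ω, divMC 1 u x = 2 * H) :
    ∀ c : E2, ¬ Metric.closedBall c (1 / |H|) ⊆ Ω :=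
  statement_4_general Ω hΩ H hH u hu heq
end
end

section
/- Lorentzian height estimate via cylinders: if u solves div(Du/√(1−|Du|²)) = 2H, |Du| < 1, in a bounded domain Ω ⊂ ℝ² with u = 0 on ∂Ω and H ≠ 0, then sup_Ω |u| ≤ (1/(2|H|))(√(1 + Θ(Ω)²H²) − 1), where Θ(Ω) is the width of the narrowest strip containing Ω. -/
/-!
Compare `u` with the spacelike cylinders `φ y = C - √(r² + (⟪a, y⟫ - m)²)` over a strip
`b ≤ ⟪a, y⟫ ≤ b + w` containing `Ω`, with `m = b + w / 2` and `C = √(r² + (w / 2)²)`.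
Such a cylinder has constant mean curvature `div (Dφ / √(1 - |Dφ|²)) = -1 / r`, is nonnegative
on the strip, and never exceeds `C - r`. For `r < 1 / (2|H|)` the curvature `2H` of `u` is
strictly larger, so `u - φ` has no positive interior maximum: there `Du = Dφ` and `D²u ≤ D²φ`,
and the operator is elliptic. Hence `u ≤ C - r`; letting `w ↓ Θ(Ω)` and `r ↑ 1 / (2|H|)` gives
the upper bound, and `-u`, a solution for `-H`, gives the lower one.
-/

set_option autoImplicit false

noncomputable section
open Real Set

/-- The set of widths of strips (regions between two parallel lines) containing `A`. -/
def stripWidths (A : Set E2) : Set ℝ :=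
  {w : ℝ | 0 ≤ w ∧ ∃ a : E2, ‖a‖ = 1 ∧ ∃ b : ℝ, ∀ x ∈ A, b ≤ inner ℝ a x ∧ (inner ℝ a x : ℝ) ≤ b + w}

/-- `Θ(A)`: the width of the narrowest strip containing `A`. -/
def Theta (A : Set E2) : ℝ := sInf (stripWidths A)

open Filter Topology

theorem IsLocalMax.deriv_deriv_nonpos {f : ℝ → ℝ} {x₀ : ℝ} (h : IsLocalMax f x₀)
    (hc : ContinuousAt f x₀) : deriv (deriv f) x₀ ≤ 0 := by
  by_contra! hpos
  -- a local max that the second derivative test makes a local min is locally constant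
  have hconst : f =ᶠ[𝓝 x₀] fun _ => f x₀ := by
    filter_upwards [h, isLocalMin_of_deriv_deriv_pos hpos h.deriv_eq_zero hc] with x hmax hmin
    exact le_antisymm hmax hmin
  have hderiv : deriv f =ᶠ[𝓝 x₀] fun _ => 0 := by
    simpa only [deriv_const'] using hconst.deriv
  rw [hderiv.deriv_eq, deriv_const] at hpos
  exact hpos.false

theorem IsLocalMax.fderiv_fderiv_apply_self_nonpos {E : Type*} [NormedAddCommGroup E]
    [NormedSpace ℝ E] {f : E → ℝ} {z : E} (h : IsLocalMax f z) (hf : ContDiffAt ℝ 2 f z)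
    (v : E) : fderiv ℝ (fderiv ℝ f) z v v ≤ 0 := by
  set line : ℝ → E := fun t => z + t • v
  have hline : ∀ t, HasDerivAt line v t := fun t => by
    simpa only [one_smul] using ((hasDerivAt_id' t).smul_const v).const_add z
  have hline0 : line 0 = z := by simp [line]
  have hline_cont : ContinuousAt line 0 := (hline 0).continuousAt
  have hdiff : ∀ᶠ t in 𝓝 0, DifferentiableAt ℝ f (line t) := by
    rw [← hline0] at hf
    exact hline_cont.eventually ((hf.eventually (by simp)).mono
      fun y hy => hy.differentiableAt two_ne_zero)
  have hderiv : deriv (fun t => f (line t)) =ᶠ[𝓝 0] fun t => fderiv ℝ f (line t) v :=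
    hdiff.mono fun t ht => (ht.hasFDerivAt.comp_hasDerivAt t (hline t)).deriv
  have hF : HasFDerivAt (fderiv ℝ f) (fderiv ℝ (fderiv ℝ f) z) (line 0) := by
    rw [hline0]
    exact ((hf.fderiv_right (m := 1) (by norm_num)).differentiableAt one_ne_zero).hasFDerivAt
  have hderiv2 : HasDerivAt (fun t => fderiv ℝ f (line t) v) (fderiv ℝ (fderiv ℝ f) z v v) 0 :=
    (ContinuousLinearMap.apply ℝ ℝ v).hasFDerivAt.comp_hasDerivAt 0
      (hF.comp_hasDerivAt 0 (hline 0))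
  have hmax : IsLocalMax (fun t => f (line t)) 0 := by
    rw [← hline0] at h
    exact h.comp_continuous hline_cont
  rw [← hderiv2.deriv, ← hderiv.deriv_eq]
  exact hmax.deriv_deriv_nonpos (hf.continuousAt.comp_of_eq hline_cont hline0)

lemma ContinuousLinearMap.apply_apply_eq_sum {ι : Type*} [Fintype ι] [DecidableEq ι]
    (B : EuclideanSpace ℝ ι →L[ℝ] EuclideanSpace ℝ ι →L[ℝ] ℝ) (v w : EuclideanSpace ℝ ι) :
    B v w = ∑ i, ∑ j, v i * w j *
      B (EuclideanSpace.single i 1) (EuclideanSpace.single j 1) := by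
  have hsum := (EuclideanSpace.basisFun ι ℝ).sum_repr
  simp only [EuclideanSpace.basisFun_repr, EuclideanSpace.basisFun_apply] at hsum
  conv_lhs => rw [← hsum v, ← hsum w]
  simp only [map_sum, map_smul, sum_apply, smul_apply, smul_eq_mul, Finset.mul_sum]
  rw [Finset.sum_comm]
  exact Finset.sum_congr rfl fun i _ => Finset.sum_congr rfl fun j _ => by ring

section PartialDerivatives

variable {f g w : E2 → ℝ} {z : E2}

lemma pd_sub (hf : DifferentiableAt ℝ f z) (hg : DifferentiableAt ℝ g z) (i : Fin 2) :
    pd i (fun y => f y - g y) z = pd i f z - pd i g z := by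
  rw [pd, fderiv_fun_sub hf hg]
  rfl

lemma pd_neg (f : E2 → ℝ) (i : Fin 2) (z : E2) : pd i (fun y => -f y) z = -pd i f z := by
  rw [pd, fderiv_fun_neg]
  rfl

lemma pd_mul (hf : DifferentiableAt ℝ f z) (hg : DifferentiableAt ℝ g z) (i : Fin 2) :
    pd i (fun y => f y * g y) z = pd i f z * g z + f z * pd i g z := by
  rw [pd, fderiv_fun_mul hf hg]
  simp only [add_apply, smul_apply, smul_eq_mul, pd]
  ring

lemma pd_sum {ι : Type*} {s : Finset ι} {F : ι → E2 → ℝ}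
    (hF : ∀ j ∈ s, DifferentiableAt ℝ (F j) z) (i : Fin 2) :
    pd i (fun y => ∑ j ∈ s, F j y) z = ∑ j ∈ s, pd i (F j) z := by
  rw [pd, fderiv_fun_sum hF, sum_apply]
  rfl

lemma pd_comp {φ : ℝ → ℝ} {φ' : ℝ} (hφ : HasDerivAt φ φ' (f z)) (hf : DifferentiableAt ℝ f z)
    (i : Fin 2) : pd i (fun y => φ (f y)) z = φ' * pd i f z := by
  rw [pd, HasFDerivAt.fderiv (f := fun y => φ (f y)) (hφ.comp_hasFDerivAt z hf.hasFDerivAt)]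
  rfl

lemma pd_inner (a : E2) (i : Fin 2) (z : E2) : pd i (fun y => inner ℝ a y) z = a i := by
  rw [pd, HasFDerivAt.fderiv (f := fun y => inner ℝ a y) (innerSL ℝ a).hasFDerivAt,
    innerSL_apply_apply, EuclideanSpace.inner_single_right]
  simp

lemma differentiableAt_pd (hw : ContDiffAt ℝ 2 w z) (i : Fin 2) :
    DifferentiableAt ℝ (pd i w) z :=
  ((hw.fderiv_right (m := 1) (by norm_num)).differentiableAt one_ne_zero).clm_apply
    (differentiableAt_const _)

lemma pd_pd_eq_fderiv_fderiv (hw : DifferentiableAt ℝ (fderiv ℝ w) z) (i j : Fin 2) :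
    pd i (pd j w) z = fderiv ℝ (fderiv ℝ w) z
      (EuclideanSpace.single i 1) (EuclideanSpace.single j 1) := by
  rw [pd, HasFDerivAt.fderiv (f := pd j w) (hw.hasFDerivAt.clm_apply (hasFDerivAt_const _ z))]
  simp

lemma pd_pd_sub (hf : ContDiffAt ℝ 2 f z) (hg : ContDiffAt ℝ 2 g z) (i j : Fin 2) :
    pd i (pd j (fun y => f y - g y)) z = pd i (pd j f) z - pd i (pd j g) z := by
  have hev : pd j (fun y => f y - g y) =ᶠ[𝓝 z] fun y => pd j f y - pd j g y := by
    filter_upwards [hf.eventually (by simp), hg.eventually (by simp)] with y hfy hgy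
    exact pd_sub (hfy.differentiableAt two_ne_zero) (hgy.differentiableAt two_ne_zero) j
  rw [show pd i (pd j fun y => f y - g y) z = pd i (fun y => pd j f y - pd j g y) z from
    congrArg (fun L : E2 →L[ℝ] ℝ => L (EuclideanSpace.single i 1)) (hev.fderiv_eq (𝕜 := ℝ)),
    pd_sub (differentiableAt_pd hf j) (differentiableAt_pd hg j)]

lemma pd_gradSq (hw : ∀ j, DifferentiableAt ℝ (pd j w) z) (i : Fin 2) :
    pd i (gradSq w) z = 2 * ∑ j, pd j w z * pd i (pd j w) z := by
  have hsq : ∀ j, pd i (fun y => pd j w y ^ 2) z = 2 * pd j w z * pd i (pd j w) z := fun j => by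
    simpa using pd_comp (hasDerivAt_pow 2 (pd j w z)) (hw j) i
  rw [show gradSq w = fun y => ∑ j, pd j w y ^ 2 from rfl,
    pd_sum (F := fun j y => pd j w y ^ 2) fun j _ => (hw j).pow 2, Finset.mul_sum]
  exact Finset.sum_congr rfl fun j _ => by rw [hsq]; ring

lemma IsLocalMax.sum_mul_mul_pd_pd_nonpos (h : IsLocalMax w z) (hw : ContDiffAt ℝ 2 w z)
    (v : E2) : ∑ i, ∑ j, v i * v j * pd i (pd j w) z ≤ 0 := by
  have hF := (hw.fderiv_right (m := 1) (by norm_num)).differentiableAt one_ne_zero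
  simp only [pd_pd_eq_fderiv_fderiv hF, ← ContinuousLinearMap.apply_apply_eq_sum]
  exact h.fderiv_fderiv_apply_self_nonpos hw v

end PartialDerivatives

lemma hasDerivAt_inv_sqrt_one_add_mul {ε s : ℝ} (hs : 0 < 1 + ε * s) :
    HasDerivAt (fun t => (√(1 + ε * t))⁻¹) (-(ε / (2 * √(1 + ε * s) ^ 3))) s := by
  have hsqrt := (((hasDerivAt_id' s).const_mul ε).const_add 1).sqrt hs.ne'
  refine ((hasDerivAt_inv (Real.sqrt_ne_zero'.2 hs)).comp s hsqrt).congr_deriv ?_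
  field_simp

section DivMC

variable {w : E2 → ℝ} {z : E2}

lemma differentiableAt_gradSq (hw : ∀ j, DifferentiableAt ℝ (pd j w) z) :
    DifferentiableAt ℝ (gradSq w) z :=
  DifferentiableAt.fun_sum fun j _ => (hw j).pow 2

lemma divMC_eq_lap_crossTerm (ε : ℝ) (hw : ∀ j, DifferentiableAt ℝ (pd j w) z)
    (hpos : 0 < 1 + ε * gradSq w z) :
    divMC ε w z = lap w z / √(1 + ε * gradSq w z)
      - ε * crossTerm w z / √(1 + ε * gradSq w z) ^ 3 := by
  have hψ := hasDerivAt_inv_sqrt_one_add_mul hpos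
  have hterm : ∀ i, pd i (fun y => pd i w y / √(1 + ε * gradSq w y)) z
      = pd i (pd i w) z / √(1 + ε * gradSq w z)
        - ε * ∑ j, pd i w z * pd j w z * pd i (pd j w) z / √(1 + ε * gradSq w z) ^ 3 := by
    intro i
    have hsum : ∑ j, pd i w z * pd j w z * pd i (pd j w) z / √(1 + ε * gradSq w z) ^ 3
        = pd i w z * (∑ j, pd j w z * pd i (pd j w) z) / √(1 + ε * gradSq w z) ^ 3 := by
      simp only [Finset.mul_sum, Finset.sum_div, mul_assoc]
    simp only [div_eq_mul_inv (pd i w _)]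
    rw [pd_mul (g := fun y => (√(1 + ε * gradSq w y))⁻¹) (hw i)
        (hψ.differentiableAt.comp z (differentiableAt_gradSq hw)),
      pd_comp hψ (differentiableAt_gradSq hw), pd_gradSq hw, hsum]
    field_simp
    ring
  simp only [divMC, hterm, Finset.sum_sub_distrib, lap, crossTerm, Finset.sum_div, Finset.mul_sum,
    mul_div_assoc]

end DivMC

lemma gradSq_neg (f : E2 → ℝ) (x : E2) : gradSq (fun y => -f y) x = gradSq f x := by
  simp only [gradSq, pd_neg, neg_sq]

lemma divMC_neg (ε : ℝ) (f : E2 → ℝ) (x : E2) :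
    divMC ε (fun y => -f y) x = -divMC ε f x := by
  simp only [divMC, pd_neg, gradSq_neg, neg_div, ← Finset.sum_neg_distrib]

lemma divMC_le_of_isLocalMax_sub {ε : ℝ} (hε : ε ≤ 0) {u φ : E2 → ℝ} {z : E2}
    (hu : ContDiffAt ℝ 2 u z) (hφ : ContDiffAt ℝ 2 φ z) (hpos : 0 < 1 + ε * gradSq u z)
    (hmax : IsLocalMax (fun y => u y - φ y) z) : divMC ε u z ≤ divMC ε φ z := by
  have hgrad : ∀ i, pd i u z = pd i φ z := fun i => by
    have hcrit : pd i (fun y => u y - φ y) z = 0 := by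
      rw [pd, hmax.fderiv_eq_zero]
      rfl
    rw [pd_sub (hu.differentiableAt two_ne_zero) (hφ.differentiableAt two_ne_zero)] at hcrit
    linarith
  have hgradSq : gradSq φ z = gradSq u z := by simp only [gradSq, hgrad]
  have hdiag : ∀ k, pd k (pd k fun y => u y - φ y) z ≤ 0 := fun k => by
    simpa using
      hmax.sum_mul_mul_pd_pd_nonpos (hu.sub hφ) (EuclideanSpace.single k 1)
  have hlap : lap u z - lap φ z ≤ 0 := by
    simp only [lap, ← Finset.sum_sub_distrib, ← pd_pd_sub hu hφ]
    exact Finset.sum_nonpos fun k _ => hdiag k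
  have hcross : crossTerm u z - crossTerm φ z ≤ 0 := by
    simp only [crossTerm, ← hgrad, ← Finset.sum_sub_distrib, ← mul_sub, ← pd_pd_sub hu hφ]
    exact hmax.sum_mul_mul_pd_pd_nonpos (hu.sub hφ) (WithLp.toLp 2 fun i => pd i u z)
  have hW : 0 < √(1 + ε * gradSq u z) := Real.sqrt_pos.2 hpos
  rw [divMC_eq_lap_crossTerm ε (differentiableAt_pd hu) hpos,
    divMC_eq_lap_crossTerm ε (differentiableAt_pd hφ) (hgradSq ▸ hpos), hgradSq]
  have hlap' := div_nonpos_of_nonpos_of_nonneg hlap hW.le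
  have hcross' : 0 ≤ ε * (crossTerm u z - crossTerm φ z) / √(1 + ε * gradSq u z) ^ 3 :=
    div_nonneg (mul_nonneg_of_nonpos_of_nonpos hε hcross) (by positivity)
  rw [sub_div] at hlap'
  rw [mul_sub, sub_div] at hcross'
  linarith

theorem le_of_forall_divMC_lt {ε : ℝ} (hε : ε ≤ 0) {Ω : Set E2} (hΩ : IsOpen Ω)
    (hb : Bornology.IsBounded Ω) {u φ : E2 → ℝ} (hu : ContDiffOn ℝ 2 u Ω)
    (hφ : ContDiffOn ℝ 2 φ Ω) (huc : ContinuousOn u (closure Ω))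
    (hφc : ContinuousOn φ (closure Ω)) (hpos : ∀ x ∈ Ω, 0 < 1 + ε * gradSq u x)
    (hlt : ∀ x ∈ Ω, divMC ε φ x < divMC ε u x) (hbd : ∀ x ∈ frontier Ω, u x ≤ φ x) :
    ∀ x ∈ Ω, u x ≤ φ x := by
  intro x hx
  obtain ⟨z, hzcl, hzmax⟩ :=
    hb.isCompact_closure.exists_isMaxOn ⟨x, subset_closure hx⟩ (huc.sub hφc)
  have hxz : u x - φ x ≤ u z - φ z := hzmax (subset_closure hx)
  by_cases hzΩ : z ∈ Ω
  · have hloc : IsLocalMax (fun y => u y - φ y) z :=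
      hzmax.isLocalMax (mem_of_superset (hΩ.mem_nhds hzΩ) subset_closure)
    exact absurd (divMC_le_of_isLocalMax_sub hε (hu.contDiffAt (hΩ.mem_nhds hzΩ))
      (hφ.contDiffAt (hΩ.mem_nhds hzΩ)) (hpos z hzΩ) hloc) (hlt z hzΩ).not_ge
  · have hz := hbd z (hΩ.frontier_eq ▸ ⟨hzcl, hzΩ⟩)
    linarith

lemma EuclideanSpace.sum_sq_eq_one {ι : Type*} [Fintype ι] {a : EuclideanSpace ℝ ι}
    (ha : ‖a‖ = 1) : ∑ i, a i ^ 2 = 1 := by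
  rw [← EuclideanSpace.real_norm_sq_eq, ha, one_pow]

section OneVariable

variable {a : E2} {f f' : ℝ → ℝ}

lemma pd_comp_inner {x : E2} (hf : HasDerivAt f (f' (inner ℝ a x)) (inner ℝ a x)) (i : Fin 2) :
    pd i (fun y => f (inner ℝ a y)) x = f' (inner ℝ a x) * a i := by
  rw [pd_comp hf (innerSL ℝ a).differentiableAt, pd_inner]

lemma gradSq_comp_inner (ha : ‖a‖ = 1) (hf : ∀ t, HasDerivAt f (f' t) t) (x : E2) :
    gradSq (fun y => f (inner ℝ a y)) x = f' (inner ℝ a x) ^ 2 := by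
  simp only [gradSq, pd_comp_inner (hf _), mul_pow, ← Finset.mul_sum,
    EuclideanSpace.sum_sq_eq_one ha, mul_one]

lemma divMC_comp_inner (ε : ℝ) (ha : ‖a‖ = 1) (hf : ∀ t, HasDerivAt f (f' t) t) {g' : ℝ}
    {x : E2} (hg : HasDerivAt (fun t => f' t / √(1 + ε * f' t ^ 2)) g' (inner ℝ a x)) :
    divMC ε (fun y => f (inner ℝ a y)) x = g' := by
  have hflux : ∀ i, (fun y => pd i (fun y => f (inner ℝ a y)) y
        / √(1 + ε * gradSq (fun y => f (inner ℝ a y)) y))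
      = fun y => a i * (f' (inner ℝ a y) / √(1 + ε * f' (inner ℝ a y) ^ 2)) := fun i =>
    funext fun y => by rw [pd_comp_inner (hf _), gradSq_comp_inner ha hf]; ring
  have hterm : ∀ i, pd i (fun y => a i * (f' (inner ℝ a y) / √(1 + ε * f' (inner ℝ a y) ^ 2))) x
      = g' * a i ^ 2 := fun i => by
    rw [pd_comp (hg.const_mul (a i)) (innerSL ℝ a).differentiableAt, pd_inner]
    ring
  simp only [divMC, hflux, hterm, ← Finset.mul_sum, EuclideanSpace.sum_sq_eq_one ha, mul_one]

end OneVariable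

def cylinder (a : E2) (m C r : ℝ) (y : E2) : ℝ := C - √(r ^ 2 + (inner ℝ a y - m) ^ 2)

section Cylinder

variable {a : E2} {m C r : ℝ}

lemma contDiff_cylinder (hr : 0 < r) : ContDiff ℝ 2 (cylinder a m C r) := by
  have hquad : ContDiff ℝ 2 fun y => r ^ 2 + (inner ℝ a y - m) ^ 2 :=
    contDiff_const.add (((innerSL ℝ a).contDiff.sub contDiff_const).pow 2)
  exact contDiff_const.sub (hquad.sqrt fun y => by positivity)

lemma cylinder_le (y : E2) : cylinder a m C r y ≤ C - r := by
  have : r ≤ √(r ^ 2 + (inner ℝ a y - m) ^ 2) :=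
    Real.le_sqrt_of_sq_le (le_add_of_nonneg_right (sq_nonneg _))
  rw [cylinder]
  linarith

lemma divMC_cylinder (ha : ‖a‖ = 1) (hr : 0 < r) (x : E2) :
    divMC (-1) (cylinder a m C r) x = -(1 / r) := by
  have hpos : ∀ t, 0 < r ^ 2 + (t - m) ^ 2 := fun t => by positivity
  have hprofile : ∀ t, HasDerivAt (fun t => C - √(r ^ 2 + (t - m) ^ 2))
      (-((t - m) / √(r ^ 2 + (t - m) ^ 2))) t := fun t => by
    refine ((((hasDerivAt_id' t).sub_const m).pow 2).const_add (r ^ 2) |>.sqrt (hpos t).ne'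
      |>.const_sub C).congr_deriv ?_
    simp only [Pi.pow_apply]
    field_simp
    ring
  -- the profile is a hyperbola, whose Lorentzian flux `f' / √(1 - f'²)` is affine
  have hflux : (fun t => -((t - m) / √(r ^ 2 + (t - m) ^ 2))
        / √(1 + -1 * (-((t - m) / √(r ^ 2 + (t - m) ^ 2))) ^ 2))
      = fun t => -((t - m) / r) := funext fun t => by
    have hR := Real.sq_sqrt (hpos t).le
    have hR0 := Real.sqrt_pos.2 (hpos t)
    have h1 : 1 + -1 * (-((t - m) / √(r ^ 2 + (t - m) ^ 2))) ^ 2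
        = (r / √(r ^ 2 + (t - m) ^ 2)) ^ 2 := by
      field_simp
      linarith
    rw [h1, Real.sqrt_sq (by positivity)]
    field_simp
  exact divMC_comp_inner (-1) ha hprofile
    (hflux ▸ (((hasDerivAt_id' _).sub_const m).div_const r).neg)

lemma stripWidths_nonempty {A : Set E2} (hA : Bornology.IsBounded A) :
    (stripWidths A).Nonempty := by
  obtain ⟨R, hR, hsub⟩ := hA.subset_closedBall_lt 0 0
  have hnorm : ‖EuclideanSpace.single (0 : Fin 2) (1 : ℝ)‖ = 1 := by simp
  refine ⟨2 * R, by positivity, EuclideanSpace.single 0 1, hnorm, -R, fun x hx => ?_⟩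
  have hx : ‖x‖ ≤ R := by simpa using hsub hx
  have := abs_real_inner_le_norm (EuclideanSpace.single (0 : Fin 2) (1 : ℝ)) x
  rw [hnorm, one_mul] at this
  constructor <;> linarith [abs_le.1 this]

section HeightEstimate

variable {Ω : Set E2} {u : E2 → ℝ} {r : ℝ}

lemma le_cylinder_height_of_mem_stripWidths (hΩ : IsOpen Ω) (hb : Bornology.IsBounded Ω)
    (hu : ContDiffOn ℝ 2 u Ω) (hc : ContinuousOn u (closure Ω))
    (hsp : ∀ x ∈ Ω, gradSq u x < 1) (hbd : ∀ x ∈ frontier Ω, u x ≤ 0) (hr : 0 < r)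
    (hdiv : ∀ x ∈ Ω, -(1 / r) < divMC (-1) u x) {w : ℝ} (hw : w ∈ stripWidths Ω) :
    ∀ x ∈ Ω, u x ≤ √(r ^ 2 + (w / 2) ^ 2) - r := by
  obtain ⟨-, a, ha, b, hstrip⟩ := hw
  set φ := cylinder a (b + w / 2) (√(r ^ 2 + (w / 2) ^ 2)) r
  have hφ : ContDiff ℝ 2 φ := contDiff_cylinder hr
  have hclosure : closure Ω ⊆ {y | b ≤ inner ℝ a y ∧ inner ℝ a y ≤ b + w} :=
    closure_minimal hstrip <| (isClosed_le continuous_const (innerSL ℝ a).continuous).inter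
      (isClosed_le (innerSL ℝ a).continuous continuous_const)
  have hφ_nonneg : ∀ y ∈ frontier Ω, 0 ≤ φ y := fun y hy => by
    obtain ⟨hlow, hhigh⟩ := hclosure (frontier_subset_closure hy)
    simp only [φ, cylinder, sub_nonneg]
    exact Real.sqrt_le_sqrt (by nlinarith)
  intro x hx
  refine (le_of_forall_divMC_lt (ε := -1) (by norm_num) hΩ hb hu hφ.contDiffOn hc
    hφ.continuous.continuousOn (fun y hy => by linarith [hsp y hy]) (fun y hy => ?_)
    (fun y hy => (hbd y hy).trans (hφ_nonneg y hy)) x hx).trans (cylinder_le x)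
  rw [divMC_cylinder ha hr]
  exact hdiv y hy

theorem le_cylinder_height (hΩ : IsOpen Ω) (hb : Bornology.IsBounded Ω)
    (hu : ContDiffOn ℝ 2 u Ω) (hc : ContinuousOn u (closure Ω))
    (hsp : ∀ x ∈ Ω, gradSq u x < 1) (hbd : ∀ x ∈ frontier Ω, u x ≤ 0) (hr : 0 < r)
    (hdiv : ∀ x ∈ Ω, -(1 / r) ≤ divMC (-1) u x) :
    ∀ x ∈ Ω, u x ≤ √(r ^ 2 + (Theta Ω / 2) ^ 2) - r := by
  intro x hx
  have hclosed : IsClosed {p : ℝ × ℝ | u x ≤ √(p.1 ^ 2 + (p.2 / 2) ^ 2) - p.1} :=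
    isClosed_le continuous_const (by fun_prop)
  -- the comparison principle needs a strict inequality, hence cylinders of smaller radius
  have hsub : Ioo 0 r ×ˢ stripWidths Ω ⊆ {p | u x ≤ √(p.1 ^ 2 + (p.2 / 2) ^ 2) - p.1} :=
    fun p ⟨hs, hw⟩ => le_cylinder_height_of_mem_stripWidths hΩ hb hu hc hsp hbd hs.1
      (fun y hy => (neg_lt_neg (one_div_lt_one_div_of_lt hs.1 hs.2)).trans_le (hdiv y hy)) hw x hx
  have hmem : (r, Theta Ω) ∈ closure (Ioo 0 r ×ˢ stripWidths Ω) := by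
    rw [closure_prod_eq, closure_Ioo hr.ne]
    exact ⟨right_mem_Icc.2 hr.le,
      csInf_mem_closure (stripWidths_nonempty hb) ⟨0, fun w hw => hw.1⟩⟩
  exact closure_minimal hsub hclosed hmem

end HeightEstimate

theorem statement_11_general (Ω : Set E2) (hΩ : IsOpen Ω)
    (hb : Bornology.IsBounded Ω)
    (H : ℝ) (hH : H ≠ 0) (u : E2 → ℝ)
    (hu : ContDiffOn ℝ 2 u Ω) (hc : ContinuousOn u (closure Ω))
    (hsp : ∀ x ∈ Ω, gradSq u x < 1)
    (hbd : ∀ x ∈ frontier Ω, u x = 0)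
    (heq : ∀ x ∈ Ω, divMC (-1) u x = 2 * H) :
    ∀ x ∈ Ω, |u x| ≤ (1 / (2 * |H|)) * (Real.sqrt (1 + Theta Ω ^ 2 * H ^ 2) - 1) := by
  have hr : 0 < 1 / (2 * |H|) := by positivity
  have hheight : (1 / (2 * |H|)) * (√(1 + Theta Ω ^ 2 * H ^ 2) - 1)
      = √((1 / (2 * |H|)) ^ 2 + (Theta Ω / 2) ^ 2) - 1 / (2 * |H|) := by
    rw [show (1 / (2 * |H|)) ^ 2 + (Theta Ω / 2) ^ 2
        = (1 / (2 * |H|)) ^ 2 * (1 + Theta Ω ^ 2 * H ^ 2) by field_simp; rw [sq_abs]; ring,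
      Real.sqrt_mul (by positivity), Real.sqrt_sq hr.le]
    ring
  intro x hx
  have hup := le_cylinder_height hΩ hb hu hc hsp (fun y hy => (hbd y hy).le) hr
    (fun y hy => by rw [heq y hy, one_div_one_div]; linarith [neg_abs_le H]) x hx
  have hlow := le_cylinder_height hΩ hb hu.neg hc.neg (fun y hy => (gradSq_neg u y).trans_lt (hsp y hy))
    (fun y hy => by simp [hbd y hy]) hr
    (fun y hy => by rw [divMC_neg, heq y hy, one_div_one_div]; linarith [le_abs_self H]) x hx
  rw [← hheight] at hup hlow
  exact abs_le.2 ⟨by linarith, hup⟩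

/-- Lorentzian height estimate via cylinders: a spacelike solution of
`div(Du/√(1−|Du|²)) = 2H`, `H ≠ 0`, vanishing on `∂Ω`, satisfies
`sup_Ω |u| ≤ (1/(2|H|))(√(1 + Θ(Ω)²H²) − 1)`. -/
theorem statement_11 (Ω : Set E2) (hΩ : IsOpen Ω) (hconn : IsConnected Ω)
    (hb : Bornology.IsBounded Ω)
    (H : ℝ) (hH : H ≠ 0) (u : E2 → ℝ)
    (hu : ContDiffOn ℝ 2 u Ω) (hc : ContinuousOn u (closure Ω))
    (hsp : ∀ x ∈ Ω, gradSq u x < 1)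
    (hbd : ∀ x ∈ frontier Ω, u x = 0)
    (heq : ∀ x ∈ Ω, divMC (-1) u x = 2 * H) :
    ∀ x ∈ Ω, |u x| ≤ (1 / (2 * |H|)) * (Real.sqrt (1 + Theta Ω ^ 2 * H ^ 2) - 1) :=
  statement_11_general Ω hΩ hb H hH u hu hc hsp hbd heq
end Cylinder
end
end
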